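/- Let V_h⁰ be a finite-dimensional subspace of V = H¹₀(Ω), and let a₁ₕ, a₂ₕ be bilinear forms on V with a₁ₕ positive semidefinite and symmetric, and a₂ₕ coercive with constant m > 0 and bounded. Given F₁,…,F_N ∈ V' and w_h⁰ = 0, define w_h¹,…,w_h^N ∈ V_h⁰ by a₁ₕ(w_hⁿ, v) + a₂ₕ((w_hⁿ − w_hⁿ⁻¹)/τ, v) = ⟨F_n, v⟩ for all v ∈ V_h⁰. Then this sequence exists, is unique, and satisfies max_{1≤n≤N} ‖w_hⁿ‖²_V ≤ C τ Σ_{n=1}^N ‖F_n‖²_{V'}, with C depending only on m, the bounds of the forms, and T = Nτ. -/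
import Mathlib


open MeasureTheory Finset

/-- `w` solves the backward Euler scheme with data `F`, step `τ`, `N` steps:
`w⁰ = 0`, `wⁿ ∈ V_h` and `a₁ₕ(wⁿ,v) + a₂ₕ((wⁿ−wⁿ⁻¹)/τ, v) = ⟨Fₙ,v⟩` for all `v ∈ V_h`. -/
def IsBackwardEulerSolution {V : Type*} [NormedAddCommGroup V] [NormedSpace ℝ V]
    (Vh : Submodule ℝ V) (a₁ a₂ : V →ₗ[ℝ] V →ₗ[ℝ] ℝ)
    (τ : ℝ) (N : ℕ) (F : ℕ → V →L[ℝ] ℝ) (w : ℕ → V) : Prop :=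
  w 0 = 0 ∧ ∀ n, 1 ≤ n → n ≤ N → w n ∈ Vh ∧
    ∀ v ∈ Vh, a₁ (w n) v + a₂ (τ⁻¹ • (w n - w (n - 1))) v = F n v

/-- On a finite-dimensional subspace, a bilinear form that is positive definite on the
subspace induces a bijection onto the dual, hence every linear functional can be
represented. -/
lemma exists_solution_of_posdef {V : Type*} [NormedAddCommGroup V] [NormedSpace ℝ V]
    (Vh : Submodule ℝ V) [FiniteDimensional ℝ Vh]
    (b : V →ₗ[ℝ] V →ₗ[ℝ] ℝ) (hb : ∀ v ∈ Vh, v ≠ 0 → 0 < b v v)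
    (φ : V →ₗ[ℝ] ℝ) : ∃ u ∈ Vh, ∀ v ∈ Vh, b u v = φ v := by
  let B : Vh →ₗ[ℝ] Module.Dual ℝ Vh := b.compl₁₂ Vh.subtype Vh.subtype
  have hinj : Function.Injective B := by
    intro u u' huu
    by_contra hne
    have hd : ((u - u' : Vh) : V) ≠ 0 := by
      intro h0
      exact hne (Subtype.ext (sub_eq_zero.mp (by simpa using h0)))
    have hpos := hb ((u - u' : Vh) : V) (u - u').2 hd
    have h1 : B (u - u') = 0 := by rw [map_sub, huu, sub_self]
    have h2 := LinearMap.congr_fun h1 (u - u')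
    have hzero : b ((u - u' : Vh) : V) ((u - u' : Vh) : V) = 0 := by
      simpa [B, LinearMap.compl₁₂_apply] using h2
    linarith
  have hsurj : Function.Surjective B :=
    (LinearMap.injective_iff_surjective_of_finrank_eq_finrank
      Subspace.dual_finrank_eq.symm).mp hinj
  obtain ⟨u, hu⟩ := hsurj (φ.comp Vh.subtype)
  refine ⟨u, u.2, fun v hv => ?_⟩
  have := LinearMap.congr_fun hu ⟨v, hv⟩
  simpa [B, LinearMap.compl₁₂_apply] using this

/-- The backward Euler sequence, defined by recursion using a step solver `key`. -/
noncomputable def beSeq {V : Type*} [NormedAddCommGroup V] [NormedSpace ℝ V]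
    (Vh : Submodule ℝ V) (b : V →ₗ[ℝ] V →ₗ[ℝ] ℝ)
    (key : ∀ φ : V →ₗ[ℝ] ℝ, ∃ u ∈ Vh, ∀ v ∈ Vh, b u v = φ v)
    (Φ : ℕ → V → V →ₗ[ℝ] ℝ) : ℕ → V
  | 0 => 0
  | (k+1) => (key (Φ (k+1) (beSeq Vh b key Φ k))).choose

lemma beSeq_succ_mem {V : Type*} [NormedAddCommGroup V] [NormedSpace ℝ V]
    (Vh : Submodule ℝ V) (b : V →ₗ[ℝ] V →ₗ[ℝ] ℝ)
    (key : ∀ φ : V →ₗ[ℝ] ℝ, ∃ u ∈ Vh, ∀ v ∈ Vh, b u v = φ v)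
    (Φ : ℕ → V → V →ₗ[ℝ] ℝ) (k : ℕ) : beSeq Vh b key Φ (k+1) ∈ Vh := by
  rw [beSeq]
  exact (key (Φ (k+1) (beSeq Vh b key Φ k))).choose_spec.1

lemma beSeq_succ_eq {V : Type*} [NormedAddCommGroup V] [NormedSpace ℝ V]
    (Vh : Submodule ℝ V) (b : V →ₗ[ℝ] V →ₗ[ℝ] ℝ)
    (key : ∀ φ : V →ₗ[ℝ] ℝ, ∃ u ∈ Vh, ∀ v ∈ Vh, b u v = φ v)
    (Φ : ℕ → V → V →ₗ[ℝ] ℝ) (k : ℕ) :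
    ∀ v ∈ Vh, b (beSeq Vh b key Φ (k+1)) v = Φ (k+1) (beSeq Vh b key Φ k) v := by
  rw [beSeq]
  exact (key (Φ (k+1) (beSeq Vh b key Φ k))).choose_spec.2

set_option maxHeartbeats 1000000 in
/-- **Existence, uniqueness and stability of the backward Euler scheme.**
`V = H¹₀(Ω)` (abstractly, a normed space), `V_h ⊂ V` finite dimensional, `a₁ₕ` symmetric
positive semidefinite and bounded, `a₂ₕ` bounded and coercive with constant `m > 0`.
Given `F₁,…,F_N ∈ V'` and `w⁰ = 0`, the scheme has a unique solution `w¹,…,w^N ∈ V_h`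
and `max_{1≤n≤N} ‖wⁿ‖²_V ≤ C τ Σ_{n=1}^N ‖F_n‖²_{V'}`, with `C = C(m, M, T)`,
`T = Nτ`. -/
theorem backward_euler_stability
    (V : Type*) [NormedAddCommGroup V] [NormedSpace ℝ V]
    (Vh : Submodule ℝ V) [FiniteDimensional ℝ Vh]
    (a₁ a₂ : V →ₗ[ℝ] V →ₗ[ℝ] ℝ) (m M : ℝ) (hm : 0 < m) (hmM : m ≤ M)
    (ha₁pos : ∀ v, 0 ≤ a₁ v v) (ha₁symm : ∀ v w, a₁ v w = a₁ w v)
    (ha₁bdd : ∀ v w, |a₁ v w| ≤ M * ‖v‖ * ‖w‖)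
    (ha₂coer : ∀ v, m * ‖v‖ ^ 2 ≤ a₂ v v)
    (ha₂bdd : ∀ v w, |a₂ v w| ≤ M * ‖v‖ * ‖w‖)
    (τ : ℝ) (hτ : 0 < τ) (N : ℕ) (hN : 0 < N) (T : ℝ) (hT : T = N * τ) :
    ∃ C : ℝ, 0 < C ∧
      ∀ F : ℕ → V →L[ℝ] ℝ,
        ∃ w : ℕ → V, IsBackwardEulerSolution Vh a₁ a₂ τ N F w ∧
          (∀ w₂ : ℕ → V, IsBackwardEulerSolution Vh a₁ a₂ τ N F w₂ →
            ∀ n ≤ N, w₂ n = w n) ∧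
          ∀ n, 1 ≤ n → n ≤ N →
            ‖w n‖ ^ 2 ≤ C * τ * ∑ i ∈ Finset.Icc 1 N, ‖F i‖ ^ 2 := by
  have hτ' : τ ≠ 0 := ne_of_gt hτ
  have hm' : m ≠ 0 := ne_of_gt hm
  have hNpos : (0:ℝ) < (N:ℝ) := by exact_mod_cast hN
  refine ⟨(N:ℝ) * τ / m ^ 2, div_pos (mul_pos hNpos hτ) (by positivity), fun F => ?_⟩
  -- the bilinear form of the scheme
  have hbapp : ∀ u v : V, (a₁ + τ⁻¹ • a₂) u v = a₁ u v + τ⁻¹ * a₂ u v := by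
    intro u v; simp
  have hbcoer : ∀ v ∈ Vh, v ≠ 0 → 0 < (a₁ + τ⁻¹ • a₂) v v := by
    intro v hv hv0
    have h1 := ha₁pos v
    have h2 := ha₂coer v
    have h3 : 0 < ‖v‖ ^ 2 := pow_pos (norm_pos_iff.mpr hv0) 2
    have h4 : (0:ℝ) < τ⁻¹ := inv_pos.mpr hτ
    have h5 : τ⁻¹ * (m * ‖v‖ ^ 2) ≤ τ⁻¹ * a₂ v v :=
      mul_le_mul_of_nonneg_left h2 h4.le
    have h6 : (0:ℝ) < τ⁻¹ * (m * ‖v‖ ^ 2) := mul_pos h4 (mul_pos hm h3)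
    rw [hbapp]
    linarith
  have key : ∀ φ : V →ₗ[ℝ] ℝ, ∃ u ∈ Vh, ∀ v ∈ Vh, (a₁ + τ⁻¹ • a₂) u v = φ v :=
    fun φ => exists_solution_of_posdef Vh _ hbcoer φ
  -- obtain the sequence, with opaque defining properties
  obtain ⟨w, hw0, hwmem, hweq⟩ :
      ∃ w : ℕ → V, w 0 = 0 ∧ (∀ k : ℕ, w (k+1) ∈ Vh) ∧ ∀ k : ℕ, ∀ v ∈ Vh,
        a₁ (w (k+1)) v + τ⁻¹ * a₂ (w (k+1)) v = F (k+1) v + τ⁻¹ * a₂ (w k) v := by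
    refine ⟨beSeq Vh _ key (fun n wp => (F n).toLinearMap + τ⁻¹ • (a₂ wp)),
      by rw [beSeq], fun k => beSeq_succ_mem Vh _ key _ k, fun k v hv => ?_⟩
    have h := beSeq_succ_eq Vh _ key (fun n wp => (F n).toLinearMap + τ⁻¹ • (a₂ wp)) k v hv
    rw [hbapp] at h
    rw [h]
    simp
  have hmem : ∀ n : ℕ, w n ∈ Vh := by
    intro n
    cases n with
    | zero => rw [hw0]; exact Vh.zero_mem
    | succ k => exact hwmem k
  -- the scheme equation in its original form
  have hsol : IsBackwardEulerSolution Vh a₁ a₂ τ N F w := by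
    refine ⟨hw0, fun n hn1 hnN => ?_⟩
    obtain ⟨k, rfl⟩ := Nat.exists_eq_succ_of_ne_zero (by omega : n ≠ 0)
    refine ⟨hwmem k, fun v hv => ?_⟩
    have h := hweq k v hv
    simp only [Nat.succ_sub_one, Nat.add_sub_cancel, _root_.map_smul, map_sub, LinearMap.smul_apply,
      LinearMap.sub_apply, smul_eq_mul]
    linear_combination h
  refine ⟨w, hsol, ?_, ?_⟩
  · -- uniqueness
    intro w₂ hw₂ n
    induction n with
    | zero => intro _; rw [hw₂.1, hw0]
    | succ k ih =>
      intro hkN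
      have hk : w₂ k = w k := ih (by omega)
      obtain ⟨hmem₂, heq₂⟩ := hw₂.2 (k+1) (by omega) hkN
      have hdmem : w₂ (k+1) - w (k+1) ∈ Vh := Submodule.sub_mem _ hmem₂ (hwmem k)
      have e1 := heq₂ (w₂ (k+1) - w (k+1)) hdmem
      simp only [Nat.add_sub_cancel, hk] at e1
      have e2 := hweq k (w₂ (k+1) - w (k+1)) hdmem
      have hzero : (a₁ + τ⁻¹ • a₂) (w₂ (k+1) - w (k+1)) (w₂ (k+1) - w (k+1)) = 0 := by
        rw [hbapp]
        simp only [map_sub, _root_.map_smul, LinearMap.sub_apply, LinearMap.smul_apply,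
          smul_eq_mul] at e1 e2 ⊢
        linear_combination e1 - e2
      by_contra hne
      have hd0 : w₂ (k+1) - w (k+1) ≠ 0 := sub_ne_zero.mpr hne
      have := hbcoer _ hdmem hd0
      linarith
  · -- stability
    have hA0 : a₁ (w 0) (w 0) = 0 := by rw [hw0]; simp
    have hstep : ∀ k : ℕ,
        m * τ * (a₁ (w (k+1)) (w (k+1)) - a₁ (w k) (w k))
          + m ^ 2 * ‖w (k+1) - w k‖ ^ 2 ≤ τ ^ 2 * ‖F (k+1)‖ ^ 2 := by
      intro k
      set δ := w (k+1) - w k with hδ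
      have hδmem : δ ∈ Vh := Submodule.sub_mem _ (hwmem k) (hmem k)
      have heq := hweq k δ hδmem
      have h2 : a₂ (w (k+1)) δ - a₂ (w k) δ = a₂ δ δ := by
        simp only [hδ, map_sub, LinearMap.sub_apply]
        ring
      have hkey : τ⁻¹ * a₂ δ δ = F (k+1) δ - a₁ (w (k+1)) δ := by
        linear_combination heq - τ⁻¹ * h2
      have hkey2 : a₂ δ δ = τ * (F (k+1) δ - a₁ (w (k+1)) δ) := by
        calc a₂ δ δ = τ * (τ⁻¹ * a₂ δ δ) := (mul_inv_cancel_left₀ hτ' _).symm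
          _ = τ * (F (k+1) δ - a₁ (w (k+1)) δ) := by rw [hkey]
      have hsym : 2 * a₁ (w (k+1)) δ
          = a₁ (w (k+1)) (w (k+1)) - a₁ (w k) (w k) + a₁ δ δ := by
        simp only [hδ, map_sub, LinearMap.sub_apply]
        linear_combination ha₁symm (w k) (w (k+1))
      have hpos := ha₁pos δ
      have hcoe := ha₂coer δ
      have hF : F (k+1) δ ≤ ‖F (k+1)‖ * ‖δ‖ :=
        le_trans (le_abs_self _) (by simpa [Real.norm_eq_abs] using (F (k+1)).le_opNorm δ)
      have hkey3 : m * a₂ δ δ = m * τ * F (k+1) δ - m * τ * a₁ (w (k+1)) δ := by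
        linear_combination m * hkey2
      have hsym2 : 2 * (m * τ) * a₁ (w (k+1)) δ
          = m * τ * (a₁ (w (k+1)) (w (k+1)) - a₁ (w k) (w k)) + m * τ * a₁ δ δ := by
        linear_combination (m * τ) * hsym
      nlinarith [sq_nonneg (τ * ‖F (k+1)‖ - m * ‖δ‖),
        mul_le_mul_of_nonneg_left hF (mul_pos hm hτ).le,
        mul_le_mul_of_nonneg_left hcoe hm.le,
        mul_nonneg (mul_pos hm hτ).le hpos, hkey3, hsym2]
    have hsum : ∀ k, k ≤ N → m ^ 2 * ∑ i ∈ Finset.range k, ‖w (i+1) - w i‖ ^ 2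
        ≤ τ ^ 2 * ∑ i ∈ Finset.Icc 1 N, ‖F i‖ ^ 2 := by
      intro k hk
      have h1 : ∑ i ∈ Finset.range k,
          (m * τ * (a₁ (w (i+1)) (w (i+1)) - a₁ (w i) (w i))
            + m ^ 2 * ‖w (i+1) - w i‖ ^ 2)
          ≤ ∑ i ∈ Finset.range k, τ ^ 2 * ‖F (i+1)‖ ^ 2 :=
        Finset.sum_le_sum (fun i _ => hstep i)
      rw [Finset.sum_add_distrib, ← Finset.mul_sum, ← Finset.mul_sum, ← Finset.mul_sum,
        Finset.sum_range_sub (fun i => a₁ (w i) (w i))] at h1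
      have h2 : ∑ i ∈ Finset.range k, ‖F (i+1)‖ ^ 2
          ≤ ∑ i ∈ Finset.Icc 1 N, ‖F i‖ ^ 2 := by
        rw [show Finset.Icc 1 N = Finset.Ico 1 (N+1) from (Finset.Ico_add_one_right_eq_Icc 1 N).symm,
          Finset.sum_Ico_eq_sum_range]
        simp only [Nat.add_sub_cancel]
        calc ∑ i ∈ Finset.range k, ‖F (i+1)‖ ^ 2
            ≤ ∑ i ∈ Finset.range N, ‖F (i+1)‖ ^ 2 :=
              Finset.sum_le_sum_of_subset_of_nonneg (Finset.range_subset_range.mpr hk)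
                (fun i _ _ => by positivity)
          _ = ∑ i ∈ Finset.range N, ‖F (1+i)‖ ^ 2 := by
              apply Finset.sum_congr rfl
              intro i _
              rw [add_comm]
      have h3 : 0 ≤ a₁ (w k) (w k) := ha₁pos (w k)
      have h4 : 0 ≤ m * τ := (mul_pos hm hτ).le
      have h5 : τ ^ 2 * ∑ i ∈ Finset.range k, ‖F (i+1)‖ ^ 2
          ≤ τ ^ 2 * ∑ i ∈ Finset.Icc 1 N, ‖F i‖ ^ 2 :=
        mul_le_mul_of_nonneg_left h2 (sq_nonneg τ)
      nlinarith [h1, hA0]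
    intro n hn1 hnN
    have hFnn : (0:ℝ) ≤ ∑ i ∈ Finset.Icc 1 N, ‖F i‖ ^ 2 :=
      Finset.sum_nonneg (fun i _ => by positivity)
    have hSnn : (0:ℝ) ≤ ∑ i ∈ Finset.range n, ‖w (i+1) - w i‖ ^ 2 :=
      Finset.sum_nonneg (fun i _ => by positivity)
    have hSle := hsum n hnN
    have hwn : w n = ∑ i ∈ Finset.range n, (w (i+1) - w i) := by
      rw [Finset.sum_range_sub, hw0, sub_zero]
    have hn2 : ‖w n‖ ^ 2 ≤ (∑ i ∈ Finset.range n, ‖w (i+1) - w i‖) ^ 2 := by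
      apply pow_le_pow_left₀ (norm_nonneg _)
      rw [hwn]
      exact norm_sum_le _ _
    have hn3 : (∑ i ∈ Finset.range n, ‖w (i+1) - w i‖) ^ 2
        ≤ (n:ℝ) * ∑ i ∈ Finset.range n, ‖w (i+1) - w i‖ ^ 2 := by
      simpa using sq_sum_le_card_mul_sum_sq
        (s := Finset.range n) (f := fun i => ‖w (i+1) - w i‖)
    have hnN' : (n:ℝ) ≤ (N:ℝ) := Nat.cast_le.mpr hnN
    calc ‖w n‖ ^ 2 ≤ (n:ℝ) * ∑ i ∈ Finset.range n, ‖w (i+1) - w i‖ ^ 2 :=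
          le_trans hn2 hn3
      _ ≤ (N:ℝ) * ∑ i ∈ Finset.range n, ‖w (i+1) - w i‖ ^ 2 :=
          mul_le_mul_of_nonneg_right hnN' hSnn
      _ = (N:ℝ) / m ^ 2 * (m ^ 2 * ∑ i ∈ Finset.range n, ‖w (i+1) - w i‖ ^ 2) := by
          field_simp
      _ ≤ (N:ℝ) / m ^ 2 * (τ ^ 2 * ∑ i ∈ Finset.Icc 1 N, ‖F i‖ ^ 2) :=
          mul_le_mul_of_nonneg_left hSle (by positivity)
      _ = (N:ℝ) * τ / m ^ 2 * τ * ∑ i ∈ Finset.Icc 1 N, ‖F i‖ ^ 2 := by ring
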